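/- arXiv:2105.02622 — 6 statements merged into one kernel-verified Lean document; each statement's English description precedes it below -/
import Mathlib

section
/- Let H(u) := (λ/2)‖u - f‖² on ℝⁿ with λ > 0, J proper convex, p₀ ∈ ∂J(u₀), and let u₁ be a minimizer of u ↦ H(u) + J(u) - ⟨p₀,u⟩. Then p₁ := p₀ - λ(u₁ - f) satisfies p₁ ∈ ∂J(u₁). -/
open scoped BigOperators

/-- Subdifferential of an extended-real-valued function at a point. -/
def esubdiff {n : ℕ} (J : (Fin n → ℝ) → EReal) (u₀ : Fin n → ℝ) : Set (Fin n → ℝ) :=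
  {p | ∀ u : Fin n → ℝ, J u₀ + ((∑ i, p i * (u i - u₀ i) : ℝ) : EReal) ≤ J u}

/-- Convexity for extended-real-valued (ℝ ∪ {+∞}) functions. -/
def EConvex {n : ℕ} (f : (Fin n → ℝ) → EReal) : Prop :=
  ∀ x y : Fin n → ℝ, ∀ a b : ℝ, 0 ≤ a → 0 ≤ b → a + b = 1 →
    f (a • x + b • y) ≤ (a : EReal) * f x + (b : EReal) * f y

/-- Properness: nowhere -∞ and somewhere finite. -/
def EProper {n : ℕ} (f : (Fin n → ℝ) → EReal) : Prop :=
  (∀ u, f u ≠ ⊥) ∧ ∃ u, f u ≠ ⊤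

theorem rof_bregman_explicit_subgradient {n : ℕ}
    (lam : ℝ) (hlam : 0 < lam) (f : Fin n → ℝ)
    (H : (Fin n → ℝ) → ℝ) (hH : ∀ u, H u = lam / 2 * ∑ i, (u i - f i) ^ 2)
    (J : (Fin n → ℝ) → EReal) (hJp : EProper J) (hJc : EConvex J)
    (u₀ p₀ : Fin n → ℝ) (hp₀ : p₀ ∈ esubdiff J u₀)
    (u₁ : Fin n → ℝ)
    (hmin : ∀ u : Fin n → ℝ,
      ((H u₁ : ℝ) : EReal) + J u₁ - ((∑ i, p₀ i * u₁ i : ℝ) : EReal)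
        ≤ ((H u : ℝ) : EReal) + J u - ((∑ i, p₀ i * u i : ℝ) : EReal)) :
    p₀ - lam • (u₁ - f) ∈ esubdiff J u₁ := by
  obtain ⟨hbot, w, hw⟩ := hJp
  obtain ⟨jw, hjw⟩ : ∃ r : ℝ, J w = (r : EReal) :=
    ⟨(J w).toReal, (EReal.coe_toReal hw (hbot w)).symm⟩
  -- J u₁ is finite
  have hJ₁top : J u₁ ≠ ⊤ := by
    intro h
    have hm := hmin w
    rw [h, hjw] at hm
    have hL : ((H u₁ : ℝ) : EReal) + ⊤ - ((∑ i, p₀ i * u₁ i : ℝ) : EReal) = ⊤ := by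
      rw [EReal.coe_add_top]
      rfl
    rw [hL] at hm
    have hR : ((H w : ℝ) : EReal) + (jw : EReal) - ((∑ i, p₀ i * w i : ℝ) : EReal)
        = ((H w + jw - ∑ i, p₀ i * w i : ℝ) : EReal) := by
      norm_cast
    rw [hR] at hm
    exact (EReal.coe_lt_top _).not_ge hm
  obtain ⟨j₁, hj₁⟩ : ∃ r : ℝ, J u₁ = (r : EReal) :=
    ⟨(J u₁).toReal, (EReal.coe_toReal hJ₁top (hbot u₁)).symm⟩
  intro u
  rw [hj₁]
  rcases eq_or_ne (J u) ⊤ with hu | hu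
  · rw [hu]; exact le_top
  obtain ⟨j, hj⟩ : ∃ r : ℝ, J u = (r : EReal) :=
    ⟨(J u).toReal, (EReal.coe_toReal hu (hbot u)).symm⟩
  rw [hj]
  rw [show ((j₁ : EReal) + ((∑ i, (p₀ - lam • (u₁ - f)) i * (u i - u₁ i) : ℝ) : EReal))
      = ((j₁ + ∑ i, (p₀ - lam • (u₁ - f)) i * (u i - u₁ i) : ℝ) : EReal) by norm_cast]
  rw [EReal.coe_le_coe_iff]
  set A : ℝ := ∑ i, (u₁ i - f i) * (u i - u₁ i) with hA
  set B : ℝ := ∑ i, p₀ i * (u i - u₁ i) with hB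
  set S : ℝ := ∑ i, (u i - u₁ i) ^ 2 with hS
  have hSnn : 0 ≤ S := Finset.sum_nonneg fun i _ => sq_nonneg _
  have hsum : (∑ i, (p₀ - lam • (u₁ - f)) i * (u i - u₁ i)) = B - lam * A := by
    rw [hB, hA, Finset.mul_sum, ← Finset.sum_sub_distrib]
    refine Finset.sum_congr rfl fun i _ => ?_
    simp only [Pi.sub_apply, Pi.smul_apply, smul_eq_mul]
    ring
  rw [hsum]
  -- Key step: for all t ∈ (0,1], j₁ + B - lam*A ≤ j + (lam/2)*t*S
  have key : ∀ t : ℝ, 0 < t → t ≤ 1 →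
      j₁ + (B - lam * A) ≤ j + lam / 2 * t * S := by
    intro t ht ht1
    set ut : Fin n → ℝ := u₁ + t • (u - u₁) with hut
    have hconv := hJc u₁ u (1 - t) t (by linarith) ht.le (by ring)
    have hcomb : (1 - t) • u₁ + t • u = ut := by
      funext i
      simp [hut, Pi.smul_apply, smul_eq_mul]
      ring
    rw [hcomb, hj₁, hj] at hconv
    have hconv' : J ut ≤ (((1 - t) * j₁ + t * j : ℝ) : EReal) := by
      refine hconv.trans_eq ?_
      rw [show (((1 - t) * j₁ + t * j : ℝ) : EReal)
          = ((((1 - t) : ℝ) : EReal) * (j₁ : EReal) + ((t : ℝ) : EReal) * (j : EReal)) by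
        norm_cast]
    have hutt : J ut ≠ ⊤ := fun h => by
      rw [h] at hconv'
      exact (EReal.coe_lt_top _).not_ge hconv'
    obtain ⟨jt, hjt⟩ : ∃ r : ℝ, J ut = (r : EReal) :=
      ⟨(J ut).toReal, (EReal.coe_toReal hutt (hbot ut)).symm⟩
    rw [hjt, EReal.coe_le_coe_iff] at hconv'
    have hm := hmin ut
    rw [hj₁, hjt] at hm
    rw [show ((H u₁ : ℝ) : EReal) + (j₁ : EReal) - ((∑ i, p₀ i * u₁ i : ℝ) : EReal)
        = ((H u₁ + j₁ - ∑ i, p₀ i * u₁ i : ℝ) : EReal) by norm_cast] at hm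
    rw [show ((H ut : ℝ) : EReal) + (jt : EReal) - ((∑ i, p₀ i * ut i : ℝ) : EReal)
        = ((H ut + jt - ∑ i, p₀ i * ut i : ℝ) : EReal) by norm_cast] at hm
    rw [EReal.coe_le_coe_iff] at hm
    -- expand H ut and the inner product
    have hHexp : H ut = H u₁ + lam / 2 * (2 * t * A + t ^ 2 * S) := by
      have h1 : ∑ i, (ut i - f i) ^ 2
          = ∑ i, ((u₁ i - f i) ^ 2 + 2 * t * ((u₁ i - f i) * (u i - u₁ i))
              + t ^ 2 * (u i - u₁ i) ^ 2) := by
        refine Finset.sum_congr rfl fun i _ => ?_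
        simp only [hut, Pi.add_apply, Pi.smul_apply, Pi.sub_apply, smul_eq_mul]
        ring
      rw [hH, hH, hA, hS, h1, Finset.sum_add_distrib, Finset.sum_add_distrib,
        ← Finset.mul_sum, ← Finset.mul_sum]
      ring
    have hPexp : (∑ i, p₀ i * ut i) = (∑ i, p₀ i * u₁ i) + t * B := by
      have h2 : ∑ i, p₀ i * ut i
          = ∑ i, (p₀ i * u₁ i + t * (p₀ i * (u i - u₁ i))) := by
        refine Finset.sum_congr rfl fun i _ => ?_
        simp only [hut, Pi.add_apply, Pi.smul_apply, Pi.sub_apply, smul_eq_mul]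
        ring
      rw [hB, h2, Finset.sum_add_distrib, ← Finset.mul_sum]
    rw [hHexp, hPexp] at hm
    -- hm : H u₁ + j₁ - P ≤ H u₁ + lam/2*(2tA + t²S) + jt - (P + tB)
    -- hconv' : jt ≤ (1-t)*j₁ + t*j
    -- derive t * (j₁ + B - lam*A - j - (lam/2)*t*S) ≤ 0
    have htmul : t * (j₁ + (B - lam * A) - (j + lam / 2 * t * S)) ≤ t * 0 := by
      nlinarith [hm, hconv']
    have := le_of_mul_le_mul_left htmul ht
    linarith
  refine le_of_forall_pos_le_add ?_
  intro ε hε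
  set c : ℝ := lam / 2 * S with hc
  have hcnn : 0 ≤ c := by positivity
  set t : ℝ := min 1 (ε / (c + 1)) with htdef
  have ht0 : 0 < t := lt_min one_pos (div_pos hε (by linarith))
  have ht1 : t ≤ 1 := min_le_left _ _
  have htle : t ≤ ε / (c + 1) := min_le_right _ _
  have htc : t * (c + 1) ≤ ε := by
    rw [← le_div_iff₀ (by linarith : (0:ℝ) < c + 1)]
    exact htle
  have hcs : lam / 2 * t * S ≤ ε := by
    have : c * t ≤ ε := by nlinarith
    calc lam / 2 * t * S = c * t := by rw [hc]; ring
      _ ≤ ε := this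
  have := key t ht0 ht1
  linarith
end

section
/- Let h : [γ₁, γ_L] → ℝ be the linear function h(t) = p·t for fixed p ∈ ℝ, and let γ̃ := (γ₂-γ₁, ..., γ_L - γ_{L-1}) ∈ ℝˡ. Define the lifted integrand ĥ : ℝˡ → ℝ∪{+∞} by ĥ(v) := inf over i ∈ {1,...,l}, α ∈ [0,1] of (h(γᵢ^α) + δ_{𝟙ᵢ^α}(v)). Then for every v in the convex hull of the lifted label space Γ̂, the biconjugate satisfies ĥ**(v) = p·γ₁ + ⟨p·γ̃, v⟩. -/
open scoped BigOperators

/-- The lifted representative `𝟙ᵢ^α = α𝟙ᵢ + (1-α)𝟙_{i-1} ∈ ℝˡ` (with zero-based index `i`):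
entries `1` below `i`, value `α` at `i`, `0` above. -/
def oneVec {l : ℕ} (i : Fin l) (α : ℝ) : Fin l → ℝ :=
  fun k => if (k : ℕ) < (i : ℕ) then 1 else if k = i then α else 0

/-- The sublabel value `γᵢ^α = γᵢ + α(γ_{i+1} - γᵢ)` (zero-based index `i`). -/
def gam {l : ℕ} (γ : Fin (l + 1) → ℝ) (i : Fin l) (α : ℝ) : ℝ :=
  γ i.castSucc + α * (γ i.succ - γ i.castSucc)

/-- The lifted integrand `ρ̂(v) = inf_{i,α} ( ρ(γᵢ^α) + δ_{𝟙ᵢ^α}(v) )`. -/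
noncomputable def liftInf {l : ℕ} (γ : Fin (l + 1) → ℝ) (ρ : ℝ → ℝ) (v : Fin l → ℝ) : EReal :=
  ⨅ (i : Fin l) (α : ℝ) (_ : α ∈ Set.Icc (0 : ℝ) 1 ∧ v = oneVec i α),
    ((ρ (gam γ i α) : ℝ) : EReal)

/-- Fenchel conjugate of an extended-real-valued function on ℝˡ. -/
noncomputable def fenchelConj {l : ℕ} (f : (Fin l → ℝ) → EReal) (w : Fin l → ℝ) : EReal :=
  ⨆ v : Fin l → ℝ, (((∑ k, w k * v k : ℝ) : EReal) - f v)

/-- The affine function `A(u) = p γ₀ + ⟨p γ̃, u⟩`. -/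
noncomputable def affA {l : ℕ} (γ : Fin (l + 1) → ℝ) (p : ℝ) (u : Fin l → ℝ) : ℝ :=
  p * γ 0 + ∑ k : Fin l, p * (γ k.succ - γ k.castSucc) * u k

/-- Key telescoping computation. -/
lemma sum_oneVec_key {l : ℕ} (γ : Fin (l + 1) → ℝ) (p : ℝ) (i : Fin l) (α : ℝ) :
    ∑ k : Fin l, p * (γ k.succ - γ k.castSucc) * oneVec i α k
      = p * gam γ i α - p * γ 0 := by
  set G : ℕ → ℝ := fun n => γ ⟨min n l, by omega⟩ with hG
  have hGc : ∀ k : Fin l, γ k.castSucc = G (k : ℕ) := by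
    intro k
    simp only [hG]
    congr 1
    exact Fin.ext (by simp [Fin.coe_castSucc, Nat.min_eq_left k.isLt.le])
  have hGs : ∀ k : Fin l, γ k.succ = G ((k : ℕ) + 1) := by
    intro k
    simp only [hG]
    congr 1
    exact Fin.ext (by simp [Fin.val_succ, Nat.min_eq_left (Nat.succ_le_of_lt k.isLt)])
  have hG0 : γ 0 = G 0 := by
    simp only [hG]
    congr 1
  have hstep : ∀ k : Fin l,
      p * (γ k.succ - γ k.castSucc) * oneVec i α k
        = p * (G ((k : ℕ) + 1) - G (k : ℕ)) *
            (if (k : ℕ) < (i : ℕ) then 1 else if (k : ℕ) = (i : ℕ) then α else 0) := by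
    intro k
    rw [hGc, hGs, oneVec]
    congr 1
    simp [Fin.ext_iff]
  calc ∑ k : Fin l, p * (γ k.succ - γ k.castSucc) * oneVec i α k
      = ∑ k : Fin l, p * (G ((k : ℕ) + 1) - G (k : ℕ)) *
          (if (k : ℕ) < (i : ℕ) then 1 else if (k : ℕ) = (i : ℕ) then α else 0) :=
        Finset.sum_congr rfl fun k _ => hstep k
    _ = ∑ n ∈ Finset.range l, p * (G (n + 1) - G n) *
          (if n < (i : ℕ) then 1 else if n = (i : ℕ) then α else 0) :=
        Fin.sum_univ_eq_sum_range
          (fun n => p * (G (n + 1) - G n) *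
            (if n < (i : ℕ) then 1 else if n = (i : ℕ) then α else 0)) l
    _ = ∑ n ∈ Finset.range l, (p * (G (n + 1) - G n) * (if n < (i : ℕ) then 1 else 0)
          + p * (G (n + 1) - G n) * (if n = (i : ℕ) then α else 0)) := by
        refine Finset.sum_congr rfl fun n _ => ?_
        rcases lt_trichotomy n (i : ℕ) with hn | hn | hn
        · simp [hn, Nat.ne_of_lt hn]
        · simp [hn]
        · simp [Nat.lt_asymm hn, (Nat.ne_of_lt hn).symm, not_lt_of_gt hn]
    _ = (∑ n ∈ Finset.range l, p * (G (n + 1) - G n) * (if n < (i : ℕ) then 1 else 0))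
          + ∑ n ∈ Finset.range l, p * (G (n + 1) - G n) * (if n = (i : ℕ) then α else 0) :=
        Finset.sum_add_distrib
    _ = p * gam γ i α - p * γ 0 := by
        have h1 : (∑ n ∈ Finset.range l, p * (G (n + 1) - G n) * (if n < (i : ℕ) then 1 else 0))
            = p * (G (i : ℕ) - G 0) := by
          have e1 : (∑ n ∈ Finset.range l,
              p * (G (n + 1) - G n) * (if n < (i : ℕ) then 1 else 0))
              = ∑ n ∈ Finset.range (i : ℕ), p * (G (n + 1) - G n) := by
            rw [← Finset.sum_subset (Finset.range_subset_range.mpr i.isLt.le)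
              (by intro n _ hn
                  simp only [Finset.mem_range, not_lt] at hn
                  simp [not_lt_of_ge hn])]
            exact Finset.sum_congr rfl fun n hn => by simp [Finset.mem_range.mp hn]
          rw [e1, ← Finset.mul_sum, Finset.sum_range_sub]
        have h2 : (∑ n ∈ Finset.range l, p * (G (n + 1) - G n) * (if n = (i : ℕ) then α else 0))
            = p * (G ((i : ℕ) + 1) - G (i : ℕ)) * α := by
          have e2 : (∑ n ∈ Finset.range l,
              p * (G (n + 1) - G n) * (if n = (i : ℕ) then α else 0))
              = ∑ n ∈ Finset.range l,
                  (if n = (i : ℕ) then p * (G (n + 1) - G n) * α else 0) :=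
            Finset.sum_congr rfl fun n _ => by rw [mul_ite, mul_zero]
          rw [e2, Finset.sum_ite_eq' (Finset.range l) (i : ℕ)
            (fun n => p * (G (n + 1) - G n) * α)]
          simp [i.isLt]
        rw [h1, h2, gam, hGc, hGs, hG0]
        ring

lemma affA_oneVec {l : ℕ} (γ : Fin (l + 1) → ℝ) (p : ℝ) (i : Fin l) (α : ℝ) :
    affA γ p (oneVec i α) = p * gam γ i α := by
  rw [affA, sum_oneVec_key]
  ring

lemma liftInf_ge {l : ℕ} (γ : Fin (l + 1) → ℝ) (p : ℝ) (h : ℝ → ℝ) (hh : ∀ t, h t = p * t)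
    (v : Fin l → ℝ) : ((affA γ p v : ℝ) : EReal) ≤ liftInf γ h v := by
  refine le_iInf fun i => le_iInf fun α => le_iInf fun hc => ?_
  rw [hc.2, affA_oneVec, ← hh]

lemma liftInf_le {l : ℕ} (γ : Fin (l + 1) → ℝ) (p : ℝ) (h : ℝ → ℝ) (hh : ∀ t, h t = p * t)
    (i : Fin l) (α : ℝ) (hα : α ∈ Set.Icc (0 : ℝ) 1) :
    liftInf γ h (oneVec i α) ≤ ((affA γ p (oneVec i α) : ℝ) : EReal) := by
  rw [affA_oneVec, ← hh]
  exact (iInf_le _ i).trans ((iInf_le _ α).trans (iInf_le _ ⟨hα, rfl⟩))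

theorem lifted_linear_biconjugate {l : ℕ} (hl : 0 < l)
    (γ : Fin (l + 1) → ℝ) (hγ : StrictMono γ) (p : ℝ)
    (h : ℝ → ℝ) (hh : ∀ t, h t = p * t) :
    ∀ v ∈ convexHull ℝ {w : Fin l → ℝ | ∃ i : Fin l, ∃ α ∈ Set.Icc (0 : ℝ) 1, w = oneVec i α},
      fenchelConj (fenchelConj (liftInf γ h)) v
        = ((p * γ 0 + ∑ k : Fin l, p * (γ k.succ - γ k.castSucc) * v k : ℝ) : EReal) := by
  intro v hv
  show fenchelConj (fenchelConj (liftInf γ h)) v = ((affA γ p v : ℝ) : EReal)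
  set q : Fin l → ℝ := fun k => p * (γ k.succ - γ k.castSucc) with hq
  -- the conjugate at the slope q is at most -pγ₀
  have hstar : fenchelConj (liftInf γ h) q ≤ ((-(p * γ 0) : ℝ) : EReal) := by
    refine iSup_le fun u => ?_
    calc ((∑ k, q k * u k : ℝ) : EReal) - liftInf γ h u
        ≤ ((∑ k, q k * u k : ℝ) : EReal) - ((affA γ p u : ℝ) : EReal) :=
          EReal.sub_le_sub le_rfl (liftInf_ge γ p h hh u)
      _ = ((∑ k, q k * u k - affA γ p u : ℝ) : EReal) := (EReal.coe_sub _ _).symm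
      _ = ((-(p * γ 0) : ℝ) : EReal) := by
          norm_cast
          simp only [affA, hq]
          ring
  -- lower bound
  have hre : affA γ p v = ∑ k, v k * q k - (-(p * γ 0)) := by
    rw [affA]
    have : ∑ k : Fin l, p * (γ k.succ - γ k.castSucc) * v k = ∑ k, v k * q k :=
      Finset.sum_congr rfl fun k _ => by simp only [hq]; ring
    rw [this]; ring
  have lower : ((affA γ p v : ℝ) : EReal) ≤ fenchelConj (fenchelConj (liftInf γ h)) v := by
    refine le_trans ?_ (le_iSup (fun w => ((∑ k, v k * w k : ℝ) : EReal)
      - fenchelConj (liftInf γ h) w) q)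
    calc ((affA γ p v : ℝ) : EReal)
        = ((∑ k, v k * q k - (-(p * γ 0)) : ℝ) : EReal) := by rw [hre]
      _ = ((∑ k, v k * q k : ℝ) : EReal) - ((-(p * γ 0) : ℝ) : EReal) := EReal.coe_sub _ _
      _ ≤ ((∑ k, v k * q k : ℝ) : EReal) - fenchelConj (liftInf γ h) q :=
          EReal.sub_le_sub le_rfl hstar
  -- upper bound
  have upper : fenchelConj (fenchelConj (liftInf γ h)) v ≤ ((affA γ p v : ℝ) : EReal) := by
    refine iSup_le fun w => ?_
    have hcw : ∑ k, v k * w k = ∑ k, w k * v k :=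
      Finset.sum_congr rfl fun k _ => mul_comm _ _
    rw [hcw]
    have hLw : ∀ (i : Fin l) (α : ℝ), α ∈ Set.Icc (0 : ℝ) 1 →
        ((∑ k, w k * oneVec i α k - affA γ p (oneVec i α) : ℝ) : EReal)
          ≤ fenchelConj (liftInf γ h) w := by
      intro i α hα
      calc ((∑ k, w k * oneVec i α k - affA γ p (oneVec i α) : ℝ) : EReal)
          = ((∑ k, w k * oneVec i α k : ℝ) : EReal) - ((affA γ p (oneVec i α) : ℝ) : EReal) :=
            EReal.coe_sub _ _
        _ ≤ ((∑ k, w k * oneVec i α k : ℝ) : EReal) - liftInf γ h (oneVec i α) :=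
            EReal.sub_le_sub le_rfl (liftInf_le γ p h hh i α hα)
        _ ≤ fenchelConj (liftInf γ h) w :=
            le_iSup (fun u => ((∑ k, w k * u k : ℝ) : EReal) - liftInf γ h u) (oneVec i α)
    by_cases htop : fenchelConj (liftInf γ h) w = ⊤
    · rw [htop, EReal.sub_top]
      exact bot_le
    · have hbot : fenchelConj (liftInf γ h) w ≠ ⊥ := by
        intro hb
        have h0 := hLw ⟨0, hl⟩ 0 ⟨le_rfl, zero_le_one⟩
        rw [hb] at h0
        exact EReal.coe_ne_bot _ (le_bot_iff.mp h0)
      set r : ℝ := (fenchelConj (liftInf γ h) w).toReal with hrdef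
      have hr : fenchelConj (liftInf γ h) w = (r : EReal) :=
        (EReal.coe_toReal htop hbot).symm
      -- convexity argument
      have hlin : IsLinearMap ℝ (fun u : Fin l → ℝ => ∑ k, (w k - q k) * u k) := by
        constructor
        · intro a b
          simp only [Pi.add_apply, mul_add]
          exact Finset.sum_add_distrib
        · intro c a
          simp only [Pi.smul_apply, smul_eq_mul, Finset.mul_sum]
          exact Finset.sum_congr rfl fun k _ => by ring
      have hS : {u : Fin l → ℝ | ∃ i : Fin l, ∃ α ∈ Set.Icc (0 : ℝ) 1, u = oneVec i α}
          ⊆ {u : Fin l → ℝ | ∑ k, (w k - q k) * u k ≤ r + p * γ 0} := by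
        rintro u ⟨i, α, hα, rfl⟩
        have h1 := hLw i α hα
        rw [hr] at h1
        have h2 : ∑ k, w k * oneVec i α k - affA γ p (oneVec i α) ≤ r :=
          EReal.coe_le_coe_iff.mp h1
        have h3 : ∑ k, (w k - q k) * oneVec i α k
            = ∑ k, w k * oneVec i α k - ∑ k, q k * oneVec i α k := by
          rw [← Finset.sum_sub_distrib]
          exact Finset.sum_congr rfl fun k _ => by ring
        simp only [Set.mem_setOf_eq, h3]
        have h4 : affA γ p (oneVec i α) = p * γ 0 + ∑ k, q k * oneVec i α k := rfl
        rw [h4] at h2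
        linarith
      have hv' : ∑ k, (w k - q k) * v k ≤ r + p * γ 0 :=
        convexHull_min hS (convex_halfSpace_le hlin (r + p * γ 0)) hv
      calc ((∑ k, w k * v k : ℝ) : EReal) - fenchelConj (liftInf γ h) w
          = ((∑ k, w k * v k : ℝ) : EReal) - (r : EReal) := by rw [hr]
        _ = ((∑ k, w k * v k - r : ℝ) : EReal) := (EReal.coe_sub _ _).symm
        _ ≤ ((affA γ p v : ℝ) : EReal) := by
            rw [EReal.coe_le_coe_iff]
            have h3 : ∑ k, (w k - q k) * v k = ∑ k, w k * v k - ∑ k, q k * v k := by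
              rw [← Finset.sum_sub_distrib]
              exact Finset.sum_congr rfl fun k _ => by ring
            rw [h3] at hv'
            have h4 : affA γ p v = p * γ 0 + ∑ k, q k * v k := rfl
            rw [h4]
            linarith
  exact le_antisymm upper lower
end

section
/- Let ρ₁ : [γ₁,γ_L] → ℝ be proper and bounded below, p ∈ ℝ, and ρ₂(t) := ρ₁(t) - p·t. Define the lifted integrands ρ̂ⱼ(v) := inf_{i,α} (ρⱼ(γᵢ^α) + δ_{𝟙ᵢ^α}(v)) for j = 1,2. Then the Fenchel conjugates satisfy ρ̂₂*(w) = ρ̂₁*(w + p·γ̃ ) + p·γ₁ for all w ∈ ℝˡ, where γ̃ := (γ₂-γ₁,...,γ_L-γ_{L-1}). -/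
open scoped BigOperators

/-!
The telescoping identity `⟨γ̃, 𝟙ᵢ^α⟩ = γᵢ^α - γ₁` shows that `γᵢ^α` depends only on the lifted
point `𝟙ᵢ^α`, so `ρ̂(𝟙ᵢ^α) = ρ(γᵢ^α)`, while `ρ̂ = ⊤` off the lifted points. Hence at `v = 𝟙ᵢ^α`
the terms `⟨w, v⟩ - ρ̂₂(v)` and `⟨w + pγ̃, v⟩ - ρ̂₁(v) + pγ₁` of the two suprema agree, and elsewhere
both are `⊥`.
-/

theorem Fin.sum_Iio_sub {M : Type*} [AddCommGroup M] {n : ℕ} (f : Fin (n + 1) → M) (i : Fin n) :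
    ∑ k ∈ Finset.Iio i, (f k.succ - f k.castSucc) = f i.castSucc - f 0 := by
  set F : ℕ → M := fun m => if h : m < n + 1 then f ⟨m, h⟩ else 0
  have hF : ∀ m (h : m < n + 1), F m = f ⟨m, h⟩ := fun m h => dif_pos h
  calc ∑ k ∈ Finset.Iio i, (f k.succ - f k.castSucc)
      = ∑ k ∈ Finset.Iio i, (F (k + 1) - F k) := by
        refine Finset.sum_congr rfl fun k _ => ?_
        rw [hF _ (by omega), hF _ (by omega)]; rfl
    _ = ∑ m ∈ Finset.range i, (F (m + 1) - F m) := by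
        rw [← Nat.Iio_eq_range, ← Fin.map_valEmbedding_Iio, Finset.sum_map]; rfl
    _ = f i.castSucc - f 0 := by
        rw [Finset.sum_range_sub, hF _ (by omega), hF _ (by omega)]; rfl

theorem sum_mul_oneVec {l : ℕ} (d : Fin l → ℝ) (i : Fin l) (α : ℝ) :
    ∑ k, d k * oneVec i α k = ∑ k ∈ Finset.Iio i, d k + α * d i := by
  have split : ∀ k, oneVec i α k = (if k < i then 1 else 0) + if k = i then α else 0 := by
    intro k
    rcases lt_trichotomy k i with h | rfl | h
    · simp [oneVec, h, h.ne, Fin.lt_def.mp h]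
    · simp [oneVec]
    · simp [oneVec, h.ne', not_lt.mpr h.le]
  simp only [split, mul_add, mul_ite, mul_one, mul_zero, Finset.sum_add_distrib,
    Finset.sum_ite_eq', Finset.mem_univ, if_true, ← Finset.sum_filter]
  rw [Finset.filter_gt_eq_Iio, mul_comm]

theorem gam_sub_eq_sum_mul_oneVec {l : ℕ} (γ : Fin (l + 1) → ℝ) (i : Fin l) (α : ℝ) :
    gam γ i α - γ 0 = ∑ k, (γ k.succ - γ k.castSucc) * oneVec i α k := by
  rw [sum_mul_oneVec, Fin.sum_Iio_sub, gam]
  ring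

theorem gam_eq_of_oneVec_eq {l : ℕ} (γ : Fin (l + 1) → ℝ) {i i' : Fin l} {α α' : ℝ}
    (h : oneVec i α = oneVec i' α') : gam γ i α = gam γ i' α' := by
  have := gam_sub_eq_sum_mul_oneVec γ i α
  rw [h, ← gam_sub_eq_sum_mul_oneVec] at this
  linarith

theorem liftInf_oneVec {l : ℕ} (γ : Fin (l + 1) → ℝ) (ρ : ℝ → ℝ) (i : Fin l) {α : ℝ}
    (hα : α ∈ Set.Icc (0 : ℝ) 1) : liftInf γ ρ (oneVec i α) = (ρ (gam γ i α) : EReal) := by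
  refine le_antisymm (iInf₂_le_of_le i α (iInf_le _ ⟨hα, rfl⟩)) ?_
  refine le_iInf₂ fun i' α' => le_iInf fun hv => ?_
  rw [gam_eq_of_oneVec_eq γ hv.2]

theorem liftInf_eq_top {l : ℕ} (γ : Fin (l + 1) → ℝ) (ρ : ℝ → ℝ) {v : Fin l → ℝ}
    (hv : ∀ i α, α ∈ Set.Icc (0 : ℝ) 1 → v ≠ oneVec i α) : liftInf γ ρ v = ⊤ := by
  simp only [liftInf, iInf_eq_top]
  exact fun i α h => absurd h.2 (hv i α h.1)

theorem EReal.iSup_add_coe {ι : Sort*} (f : ι → EReal) (c : ℝ) :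
    (⨆ i, f i) + c = ⨆ i, (f i + c) := by
  have hbot : (c : EReal) ≠ ⊥ := EReal.coe_ne_bot c
  have htop : (c : EReal) ≠ ⊤ := EReal.coe_ne_top c
  refine le_antisymm ?_ (iSup_le fun i => add_le_add_left (le_iSup f i) _)
  rw [← EReal.le_sub_iff_add_le (.inl hbot) (.inl htop)]
  exact iSup_le fun i => (EReal.le_sub_iff_add_le (.inl hbot) (.inl htop)).2 (le_iSup_of_le i le_rfl)

theorem lifted_conjugate_shift_general {l : ℕ}
    (γ : Fin (l + 1) → ℝ) (ρ₁ : ℝ → ℝ)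
    (p : ℝ) (ρ₂ : ℝ → ℝ) (hρ₂ : ∀ t, ρ₂ t = ρ₁ t - p * t) :
    ∀ w : Fin l → ℝ,
      fenchelConj (liftInf γ ρ₂) w
        = fenchelConj (liftInf γ ρ₁) (w + fun k : Fin l => p * (γ k.succ - γ k.castSucc))
            + ((p * γ 0 : ℝ) : EReal) := by
  intro w
  rw [fenchelConj, fenchelConj, EReal.iSup_add_coe]
  refine iSup_congr fun v => ?_
  by_cases hv : ∃ i α, α ∈ Set.Icc (0 : ℝ) 1 ∧ v = oneVec i α
  · obtain ⟨i, α, hα, rfl⟩ := hv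
    have hshift : ∑ k, (w + fun k : Fin l => p * (γ k.succ - γ k.castSucc)) k * oneVec i α k
        = ∑ k, w k * oneVec i α k + p * (gam γ i α - γ 0) := by
      simp only [Pi.add_apply, add_mul, Finset.sum_add_distrib, gam_sub_eq_sum_mul_oneVec,
        Finset.mul_sum, mul_assoc]
    rw [liftInf_oneVec γ ρ₂ i hα, liftInf_oneVec γ ρ₁ i hα, ← EReal.coe_sub, ← EReal.coe_sub,
      ← EReal.coe_add, hshift, hρ₂]
    congr 1
    ring
  · push Not at hv
    rw [liftInf_eq_top γ ρ₂ hv, liftInf_eq_top γ ρ₁ hv, EReal.sub_top, EReal.sub_top, EReal.bot_add]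

theorem lifted_conjugate_shift {l : ℕ}
    (γ : Fin (l + 1) → ℝ) (hγ : StrictMono γ)
    (ρ₁ : ℝ → ℝ) (hbdd : ∃ c : ℝ, ∀ t ∈ Set.Icc (γ 0) (γ (Fin.last l)), c ≤ ρ₁ t)
    (p : ℝ) (ρ₂ : ℝ → ℝ) (hρ₂ : ∀ t, ρ₂ t = ρ₁ t - p * t) :
    ∀ w : Fin l → ℝ,
      fenchelConj (liftInf γ ρ₂) w
        = fenchelConj (liftInf γ ρ₁) (w + fun k : Fin l => p * (γ k.succ - γ k.castSucc))
            + ((p * γ 0 : ℝ) : EReal) :=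
  lifted_conjugate_shift_general γ ρ₁ p ρ₂ hρ₂
end

section
/- Let ρ₁ : [γ₁,γ_L] → ℝ be proper and bounded below, p ∈ ℝ, ρ₂(t) := ρ₁(t) - p·t, with lifted integrands ρ̂ⱼ as in the sublabel-accurate lifting. Then the biconjugates satisfy ρ̂₂**(v) = ρ̂₁**(v) - ⟨p·γ̃, v⟩ - p·γ₁ for all v ∈ ℝˡ, where γ̃ := (γ₂-γ₁,...,γ_L-γ_{L-1}). -/
open scoped BigOperators

/-
On a lifted representative `𝟙ᵢ^α` the linear term is affine in the lifted variable:
`⟨γ̃, 𝟙ᵢ^α⟩` telescopes to `γᵢ^α - γ₁`, so `p γᵢ^α = ⟨p γ̃, 𝟙ᵢ^α⟩ + p γ₁` and hence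
`ρ̂₂ = ρ̂₁ - (⟨p γ̃, ·⟩ + p γ₁)`. Subtracting an affine function commutes with biconjugation:
the first conjugate becomes a translate of `ρ̂₁*` plus a constant, and conjugating that
subtracts the same affine function from `ρ̂₁**`.
-/

namespace EReal

noncomputable def addCoeOrderIso (c : ℝ) : EReal ≃o EReal where
  toFun x := x + c
  invFun x := x - c
  left_inv _ := add_sub_cancel_right
  right_inv _ := sub_add_cancel
  map_rel_iff' := (addLECancellable_coe c).add_le_add_iff_right

lemma iSup_add_coe_s9 {ι : Sort*} (f : ι → EReal) (c : ℝ) : ⨆ i, (f i + c) = (⨆ i, f i) + c :=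
  ((addCoeOrderIso c).map_iSup f).symm

lemma iSup_sub_coe {ι : Sort*} (f : ι → EReal) (c : ℝ) : ⨆ i, (f i - c) = (⨆ i, f i) - c :=
  iSup_add_coe_s9 f (-c)

lemma iInf_sub_coe {ι : Sort*} (f : ι → EReal) (c : ℝ) : ⨅ i, (f i - c) = (⨅ i, f i) - c :=
  ((addCoeOrderIso (-c)).map_iInf f).symm

lemma coe_sub_sub_coe (c d : ℝ) (y : EReal) : (c : EReal) - (y - d) = ↑(c + d) - y := by
  induction y <;> simp [← coe_sub, -coe_add]; ring

lemma coe_add_sub (c d : ℝ) (y : EReal) : ((c + d : ℝ) : EReal) - y = (c - y) + d := by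
  induction y <;> simp [← coe_sub, ← coe_add]; ring

lemma coe_sub_add_coe (c d : ℝ) (y : EReal) : (c : EReal) - (y + d) = ↑(c - d) - y := by
  induction y <;> simp [← coe_sub, ← coe_add]; ring

lemma coe_sub_sub (c d : ℝ) (y : EReal) : ((c - d : ℝ) : EReal) - y = (c - y) - d := by
  induction y <;> simp [← coe_sub, -coe_add]; ring

end EReal

section Fenchel

variable {l : ℕ}

lemma fenchelConj_apply (f : (Fin l → ℝ) → EReal) (w : Fin l → ℝ) :
    fenchelConj f w = ⨆ v, ((w ⬝ᵥ v : ℝ) : EReal) - f v :=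
  rfl

lemma fenchelConj_sub_affine (f : (Fin l → ℝ) → EReal) (a : Fin l → ℝ) (b : ℝ)
    (w : Fin l → ℝ) :
    fenchelConj (fun v => f v - ((a ⬝ᵥ v + b : ℝ) : EReal)) w = fenchelConj f (w + a) + b := by
  rw [fenchelConj_apply, fenchelConj_apply, ← EReal.iSup_add_coe_s9]
  refine iSup_congr fun v => ?_
  rw [EReal.coe_sub_sub_coe, ← add_assoc, add_dotProduct, dotProduct_comm a, EReal.coe_add_sub]

lemma fenchelConj_comp_add_add_const (g : (Fin l → ℝ) → EReal) (a : Fin l → ℝ) (b : ℝ)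
    (v : Fin l → ℝ) :
    fenchelConj (fun w => g (w + a) + b) v = fenchelConj g v - ((a ⬝ᵥ v : ℝ) : EReal) - b := by
  rw [fenchelConj_apply, fenchelConj_apply, ← EReal.iSup_sub_coe, ← EReal.iSup_sub_coe]
  conv_rhs => rw [← (Equiv.addRight a).iSup_comp]
  refine iSup_congr fun u => ?_
  rw [Equiv.coe_addRight, EReal.coe_sub_add_coe, ← EReal.coe_sub_sub, ← EReal.coe_sub_sub,
    dotProduct_add, dotProduct_comm v a]
  congr 2
  ring

theorem fenchelConj_fenchelConj_sub_affine (f : (Fin l → ℝ) → EReal) (a : Fin l → ℝ) (b : ℝ)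
    (v : Fin l → ℝ) :
    fenchelConj (fenchelConj (fun v => f v - ((a ⬝ᵥ v + b : ℝ) : EReal))) v
      = fenchelConj (fenchelConj f) v - ((a ⬝ᵥ v : ℝ) : EReal) - b := by
  rw [funext (fenchelConj_sub_affine f a b), fenchelConj_comp_add_add_const]

end Fenchel

section Lifting

variable {l : ℕ}

-- the paper's `γ̃`
def labelGaps (γ : Fin (l + 1) → ℝ) : Fin l → ℝ :=
  fun k => γ k.succ - γ k.castSucc

lemma oneVec_apply_eq_sub (i : Fin l) (α : ℝ) (k : Fin l) :
    oneVec i α k = (if k ≤ i then 1 else 0) - if k = i then 1 - α else 0 := by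
  rcases lt_trichotomy k i with h | rfl | h
  · simp [oneVec, h, h.le, h.ne]
  · simp [oneVec]
  · simp [oneVec, not_lt.mpr h.le, not_le.mpr h, h.ne']

lemma labelGaps_dotProduct_oneVec (γ : Fin (l + 1) → ℝ) (i : Fin l) (α : ℝ) :
    labelGaps γ ⬝ᵥ oneVec i α = gam γ i α - γ 0 := by
  have h_telescope : ∑ k ∈ Finset.Iic i, labelGaps γ k = γ i.succ - γ 0 := Fin.sum_Iic_sub i γ
  calc labelGaps γ ⬝ᵥ oneVec i α
      = ∑ k ∈ Finset.Iic i, labelGaps γ k - labelGaps γ i * (1 - α) := by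
        simp only [dotProduct, oneVec_apply_eq_sub, mul_sub, mul_ite, mul_one, mul_zero,
          Finset.sum_sub_distrib, Finset.sum_ite_eq', Finset.mem_univ, if_true,
          ← Finset.sum_filter, Finset.filter_ge_eq_Iic]
    _ = gam γ i α - γ 0 := by
        rw [h_telescope, labelGaps, gam]
        ring

lemma liftInf_sub_linear (γ : Fin (l + 1) → ℝ) (ρ : ℝ → ℝ) (p : ℝ) (v : Fin l → ℝ) :
    liftInf γ (fun t => ρ t - p * t) v
      = liftInf γ ρ v - ((p • labelGaps γ ⬝ᵥ v + p * γ 0 : ℝ) : EReal) := by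
  simp only [liftInf, ← EReal.iInf_sub_coe]
  refine iInf_congr fun i => iInf_congr fun α => iInf_congr fun ⟨_, hv⟩ => ?_
  rw [← EReal.coe_sub, hv, smul_dotProduct, labelGaps_dotProduct_oneVec, smul_eq_mul]
  congr 1
  ring

end Lifting

theorem lifted_biconjugate_sub_linear_general {l : ℕ}
    (γ : Fin (l + 1) → ℝ)
    (ρ₁ : ℝ → ℝ)
    (p : ℝ) (ρ₂ : ℝ → ℝ) (hρ₂ : ∀ t, ρ₂ t = ρ₁ t - p * t) :
    ∀ v : Fin l → ℝ,
      fenchelConj (fenchelConj (liftInf γ ρ₂)) v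
        = fenchelConj (fenchelConj (liftInf γ ρ₁)) v
            - ((∑ k : Fin l, p * (γ k.succ - γ k.castSucc) * v k : ℝ) : EReal)
            - ((p * γ 0 : ℝ) : EReal) := by
  intro v
  obtain rfl : ρ₂ = fun t => ρ₁ t - p * t := funext hρ₂
  rw [funext (liftInf_sub_linear γ ρ₁ p)]
  exact fenchelConj_fenchelConj_sub_affine (liftInf γ ρ₁) (p • labelGaps γ) (p * γ 0) v

theorem lifted_biconjugate_sub_linear {l : ℕ}
    (γ : Fin (l + 1) → ℝ) (hγ : StrictMono γ)
    (ρ₁ : ℝ → ℝ) (hbdd : ∃ c : ℝ, ∀ t ∈ Set.Icc (γ 0) (γ (Fin.last l)), c ≤ ρ₁ t)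
    (p : ℝ) (ρ₂ : ℝ → ℝ) (hρ₂ : ∀ t, ρ₂ t = ρ₁ t - p * t) :
    ∀ v : Fin l → ℝ,
      fenchelConj (fenchelConj (liftInf γ ρ₂)) v
        = fenchelConj (fenchelConj (liftInf γ ρ₁)) v
            - ((∑ k : Fin l, p * (γ k.succ - γ k.castSucc) * v k : ℝ) : EReal)
            - ((p * γ 0 : ℝ) : EReal) :=
  lifted_biconjugate_sub_linear_general γ ρ₁ p ρ₂ hρ₂
end

section
/- Let H, J : ℝⁿ → ℝ∪{+∞} be proper convex with J(u) ≥ 0 and generate the Bregman iteration: p₀ = 0, u_k ∈ argmin_u {H(u) + J(u) - ⟨p_{k-1},u⟩}, p_k ∈ ∂J(u_k) chosen so that each argmin is attained. Then the data-term values are monotonically non-increasing: H(u_{k+1}) ≤ H(u_{k+1}) + D(u_{k+1},u_k) ≤ H(u_k), where D(u,v) := J(u) - J(v) - ⟨p_k, u - v⟩ ≥ 0 is the Bregman distance. -/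
open scoped BigOperators

lemma esubdiff_ne_top {n : ℕ} {J : (Fin n → ℝ) → EReal} {u₀ q : Fin n → ℝ}
    (hJp : EProper J) (hq : q ∈ esubdiff J u₀) : J u₀ ≠ ⊤ := by
  intro h
  obtain ⟨v, hv⟩ := hJp.2
  have h2 := hq v
  rw [h, EReal.top_add_coe] at h2
  exact hv (top_le_iff.mp h2)

theorem bregman_data_term_monotone {n : ℕ}
    (H J : (Fin n → ℝ) → EReal)
    (hHp : EProper H) (hHc : EConvex H) (hJp : EProper J) (hJc : EConvex J)
    (hJnonneg : ∀ u, 0 ≤ J u)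
    (u p : ℕ → (Fin n → ℝ)) (hp0 : p 0 = 0)
    (hmin : ∀ k : ℕ, ∀ v : Fin n → ℝ,
      H (u (k + 1)) + J (u (k + 1)) - ((∑ i, p k i * u (k + 1) i : ℝ) : EReal)
        ≤ H v + J v - ((∑ i, p k i * v i : ℝ) : EReal))
    (hpk : ∀ k : ℕ, p (k + 1) ∈ esubdiff J (u (k + 1))) :
    ∀ k : ℕ, 1 ≤ k →
      -- D = Bregman distance D(u_{k+1}, u_k) w.r.t. p_k ∈ ∂J(u_k)
      (0 : EReal) ≤ J (u (k + 1)) - J (u k)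
          - ((∑ i, p k i * (u (k + 1) i - u k i) : ℝ) : EReal) ∧
      H (u (k + 1))
        ≤ H (u (k + 1)) + (J (u (k + 1)) - J (u k)
            - ((∑ i, p k i * (u (k + 1) i - u k i) : ℝ) : EReal)) ∧
      H (u (k + 1)) + (J (u (k + 1)) - J (u k)
            - ((∑ i, p k i * (u (k + 1) i - u k i) : ℝ) : EReal))
        ≤ H (u k) := by
  intro k hk
  obtain ⟨m, rfl⟩ : ∃ m, k = m + 1 := ⟨k - 1, (Nat.succ_pred_eq_of_pos hk).symm⟩
  -- finiteness of J at iterates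
  have hj0top : J (u (m + 1)) ≠ ⊤ := esubdiff_ne_top hJp (hpk m)
  have hj1top : J (u (m + 2)) ≠ ⊤ := esubdiff_ne_top hJp (hpk (m + 1))
  have hj0bot : J (u (m + 1)) ≠ ⊥ := hJp.1 _
  have hj1bot : J (u (m + 2)) ≠ ⊥ := hJp.1 _
  set j0 : ℝ := (J (u (m + 1))).toReal with hj0def
  set j1 : ℝ := (J (u (m + 2))).toReal with hj1def
  have hj0 : J (u (m + 1)) = (j0 : EReal) := (EReal.coe_toReal hj0top hj0bot).symm
  have hj1 : J (u (m + 2)) = (j1 : EReal) := (EReal.coe_toReal hj1top hj1bot).symm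
  set r1 : ℝ := ∑ i, p (m + 1) i * u (m + 2) i with hr1def
  set r0 : ℝ := ∑ i, p (m + 1) i * u (m + 1) i with hr0def
  have hrsum : (∑ i, p (m + 1) i * (u (m + 2) i - u (m + 1) i) : ℝ) = r1 - r0 := by
    rw [hr1def, hr0def, ← Finset.sum_sub_distrib]
    exact Finset.sum_congr rfl fun i _ => mul_sub _ _ _
  -- subgradient inequality: j0 + (r1 - r0) ≤ j1
  have hsub : j0 + (r1 - r0) ≤ j1 := by
    have h := hpk m (u (m + 2))
    rw [hj0, hj1, hrsum, ← EReal.coe_add] at h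
    exact_mod_cast h
  have hD : J (u (m + 1 + 1)) - J (u (m + 1)) -
      ((∑ i, p (m + 1) i * (u (m + 1 + 1) i - u (m + 1) i) : ℝ) : EReal)
      = ((j1 - j0 - (r1 - r0) : ℝ) : EReal) := by
    show J (u (m + 2)) - J (u (m + 1)) -
      ((∑ i, p (m + 1) i * (u (m + 2) i - u (m + 1) i) : ℝ) : EReal) = _
    rw [hj0, hj1, hrsum, ← EReal.coe_sub, ← EReal.coe_sub]
  have hDnn : (0 : ℝ) ≤ j1 - j0 - (r1 - r0) := by linarith
  refine ⟨?_, ?_, ?_⟩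
  · rw [hD]; exact_mod_cast hDnn
  · rw [hD]
    exact le_add_of_nonneg_right (by exact_mod_cast hDnn)
  · rw [hD]
    have hm1 := hmin (m + 1) (u (m + 1))
    rw [hj0, hj1, ← hr1def, ← hr0def] at hm1
    have hbbot : H (u (m + 1)) ≠ ⊥ := hHp.1 _
    have habot : H (u (m + 1 + 1)) ≠ ⊥ := hHp.1 _
    rcases eq_or_ne (H (u (m + 1))) ⊤ with hb | hb
    · rw [hb]; exact le_top
    · set b : ℝ := (H (u (m + 1))).toReal with hbdef
      have hbr : H (u (m + 1)) = (b : EReal) := (EReal.coe_toReal hb hbbot).symm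
      rcases eq_or_ne (H (u (m + 1 + 1))) ⊤ with ha | ha
      · exfalso
        rw [ha, hbr] at hm1
        rw [EReal.top_add_coe, EReal.top_sub_coe, ← EReal.coe_add, ← EReal.coe_sub] at hm1
        exact (EReal.coe_lt_top _).not_ge hm1
      · set a : ℝ := (H (u (m + 1 + 1))).toReal with hadef
        have har : H (u (m + 1 + 1)) = (a : EReal) := (EReal.coe_toReal ha habot).symm
        rw [har, hbr] at hm1 ⊢
        rw [← EReal.coe_add, ← EReal.coe_sub, ← EReal.coe_add, ← EReal.coe_sub] at hm1
        rw [← EReal.coe_add]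
        have : a + j1 - r1 ≤ b + j0 - r0 := by exact_mod_cast hm1
        exact_mod_cast (by linarith : a + (j1 - j0 - (r1 - r0)) ≤ b)
end

section
/- In dimension d = 1, let u, u' ∈ ℝ lift to 𝟙ᵢ^α, 𝟙ⱼ^β ∈ ℝˡ with u = γᵢ^α, u' = γⱼ^β. Then the anisotropic lifted TV cost of the jump equals the unlifted cost: sup_{q ∈ K}⟨q, 𝟙ⱼ^β - 𝟙ᵢ^α⟩ = |γⱼ^β - γᵢ^α|, where K := {q ∈ ℝˡ : |q_k| ≤ γ_{k+1}-γ_k ∀k}. -/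
open scoped BigOperators

/-! The constraint set `K` is a box with half-widths `w k = γ (k+1) - γ k ≥ 0`, so the supremum of
`⟨q, v⟩` over it is `∑ |v k| * w k`, attained at `q = sign v * w`. The lifted vector `oneVec i α`
is monotone in the sublabel position `(i, α)`, so the difference of two lifted labels has constant
sign and `∑ |v k| * w k = |∑ v k * w k|`. Finally, writing `oneVec i α` as `𝟙_{≤ i} - (1 - α) 𝟙_i`,
a telescoping sum gives `∑ k, oneVec i α k * (γ (k+1) - γ k) = gam γ i α - γ 0`. -/

section Box

variable {ι : Type*} [Fintype ι]

theorem isGreatest_sum_mul_of_abs_le (v w : ι → ℝ) (hw : 0 ≤ w) :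
    IsGreatest {x | ∃ q ∈ {q : ι → ℝ | ∀ k, |q k| ≤ w k}, x = ∑ k, q k * v k}
      (∑ k, |v k| * w k) := by
  refine ⟨⟨fun k => SignType.sign (v k) * w k, fun k => ?_, ?_⟩, ?_⟩
  · rw [abs_mul, abs_of_nonneg (hw k)]
    exact mul_le_of_le_one_left (hw k) (by rcases SignType.sign (v k) with _ | _ | _ <;> simp)
  · exact Finset.sum_congr rfl fun k _ => by rw [mul_right_comm, sign_mul_self]
  · rintro x ⟨q, hq, rfl⟩
    refine Finset.sum_le_sum fun k _ => ?_
    calc q k * v k ≤ |q k| * |v k| := abs_mul (q k) (v k) ▸ le_abs_self _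
      _ ≤ |v k| * w k := by
        rw [mul_comm]; exact mul_le_mul_of_nonneg_left (hq k) (abs_nonneg _)

theorem sum_abs_mul_eq_abs_sum_mul {v w : ι → ℝ} (hv : 0 ≤ v ∨ v ≤ 0) (hw : 0 ≤ w) :
    ∑ k, |v k| * w k = |∑ k, v k * w k| := by
  rcases hv with hv | hv
  · rw [abs_of_nonneg (Finset.sum_nonneg fun k _ => mul_nonneg (hv k) (hw k))]
    simp_rw [abs_of_nonneg (hv _)]
  · rw [abs_of_nonpos
        (Finset.sum_nonpos fun k _ => mul_nonpos_of_nonpos_of_nonneg (hv k) (hw k)),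
      ← Finset.sum_neg_distrib]
    simp_rw [abs_of_nonpos (hv _), neg_mul]

end Box

section Lift

variable {l : ℕ}

theorem oneVec_eq (i k : Fin l) (α : ℝ) :
    oneVec i α k = (if k ≤ i then 1 else 0) - if k = i then 1 - α else 0 := by
  unfold oneVec
  split_ifs <;> grind

theorem sum_oneVec_mul_sub (γ : Fin (l + 1) → ℝ) (i : Fin l) (α : ℝ) :
    ∑ k, oneVec i α k * (γ k.succ - γ k.castSucc) = gam γ i α - γ 0 := by
  simp_rw [oneVec_eq, sub_mul, Finset.sum_sub_distrib, ite_mul, one_mul, zero_mul,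
    Finset.sum_ite_eq', Finset.mem_univ, if_true]
  rw [← Finset.sum_filter, Finset.filter_ge_eq_Iic, Fin.sum_Iic_sub, gam]
  ring

theorem oneVec_mono (i : Fin l) : Monotone (oneVec i) := fun α β h k => by
  unfold oneVec; split_ifs <;> simp [h]

theorem oneVec_le_oneVec_of_lt {i j : Fin l} (hij : i < j) {α β : ℝ} (hα : α ≤ 1)
    (hβ : 0 ≤ β) : oneVec i α ≤ oneVec j β := fun k => by
  unfold oneVec
  split_ifs <;> grind

theorem oneVec_le_total (i j : Fin l) {α β : ℝ} (hα : α ∈ Set.Icc (0 : ℝ) 1)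
    (hβ : β ∈ Set.Icc (0 : ℝ) 1) : oneVec i α ≤ oneVec j β ∨ oneVec j β ≤ oneVec i α := by
  rcases lt_trichotomy i j with hij | rfl | hij
  · exact .inl (oneVec_le_oneVec_of_lt hij hα.2 hβ.1)
  · exact (le_total α β).imp (oneVec_mono i ·) (oneVec_mono i ·)
  · exact .inr (oneVec_le_oneVec_of_lt hij hβ.2 hα.1)

end Lift

theorem anisotropic_lifted_TV_exact {l : ℕ} (γ : Fin (l + 1) → ℝ) (hγ : StrictMono γ)
    (i j : Fin l) (α β : ℝ)
    (hα : α ∈ Set.Icc (0 : ℝ) 1) (hβ : β ∈ Set.Icc (0 : ℝ) 1)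
    (K : Set (Fin l → ℝ))
    (hK : K = {q : Fin l → ℝ | ∀ k : Fin l, |q k| ≤ γ k.succ - γ k.castSucc}) :
    sSup {x : ℝ | ∃ q ∈ K, x = ∑ k : Fin l, q k * (oneVec j β k - oneVec i α k)}
      = |gam γ j β - gam γ i α| := by
  subst hK
  have hw : 0 ≤ fun k : Fin l => γ k.succ - γ k.castSucc :=
    fun k => sub_nonneg.2 (hγ.monotone k.castSucc_le_succ)
  have hsign : (0 ≤ fun k => oneVec j β k - oneVec i α k) ∨
      (fun k => oneVec j β k - oneVec i α k) ≤ 0 :=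
    (oneVec_le_total i j hα hβ).imp (fun h k => sub_nonneg.2 (h k))
      (fun h k => sub_nonpos.2 (h k))
  rw [(isGreatest_sum_mul_of_abs_le _ _ hw).csSup_eq, sum_abs_mul_eq_abs_sum_mul hsign hw]
  simp only [sub_mul, Finset.sum_sub_distrib, sum_oneVec_mul_sub, sub_sub_sub_cancel_right]
end
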